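/- arXiv:2003.07541 — 5 statements merged into one kernel-verified Lean document; each statement's English description precedes it below -/
import Mathlib

section
/- (Erdős–Gallai) For all integers k, n ≥ 1, every simple graph on n vertices containing no path on k vertices as a subgraph has at most (k−2)n/2 edges. -/
/-- `G` contains a path on `k` vertices as a subgraph. -/
def ContainsPathOn {V : Type*} (G : SimpleGraph V) (k : ℕ) : Prop :=
  ∃ p : Fin k → V, Function.Injective p ∧
    ∀ (j : ℕ) (h : j + 1 < k), G.Adj (p ⟨j, Nat.lt_of_succ_lt h⟩) (p ⟨j + 1, h⟩)

/-!
Induction on the number of vertices. A vertex of degree at most `(k - 2) / 2` can be deleted, and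
if every degree is at most `k - 2` the bound is the handshake lemma. Otherwise every degree is at
least `(k - 1) / 2` and some component has at least `k` vertices. In a connected graph with this
minimum degree, take a path `f 0, …, f (L - 1)` with `L < k` that cannot be extended at either end:
all neighbours of its endpoints lie on it, and since their degrees add up to at least `L`, some `i`
has `f 0 ~ f (i + 1)` and `f (L - 1) ~ f i`. Then the path vertices span a cycle, and an edge
leaving that cycle yields a path on `L + 1` vertices.
-/

open Finset

namespace SimpleGraph

variable {V : Type*} {G : SimpleGraph V} {L k i : ℕ} {f c : ℕ → V} {a u : V}

-- Paths and cycles are `ℕ`-indexed vertex sequences, of which only the first `L` values matter,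
-- so that all index arithmetic stays in `ℕ`.
def IsPathSeq (G : SimpleGraph V) (L : ℕ) (f : ℕ → V) : Prop :=
  Set.InjOn f (Set.Iio L) ∧ ∀ j, j + 1 < L → G.Adj (f j) (f (j + 1))

def IsCycleSeq (G : SimpleGraph V) (L : ℕ) (c : ℕ → V) : Prop :=
  Set.InjOn c (Set.Iio L) ∧ ∀ j < L, G.Adj (c j) (c ((j + 1) % L))

theorem IsPathSeq.containsPathOn (hf : G.IsPathSeq L f) : ContainsPathOn G L :=
  ⟨fun j => f j, fun a b hab => Fin.ext (hf.1 a.isLt b.isLt hab), fun j hj => hf.2 j hj⟩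

theorem isPathSeq_one (v : V) : G.IsPathSeq 1 (fun _ => v) :=
  ⟨fun a ha b hb _ => by simp_all, fun j hj => by omega⟩

theorem IsPathSeq.reverse (hf : G.IsPathSeq L f) : G.IsPathSeq L (fun j => f (L - 1 - j)) := by
  refine ⟨fun a ha b hb hab => ?_, fun j hj => ?_⟩
  · simp only [Set.mem_Iio] at ha hb
    have := hf.1 (show L - 1 - a < L by omega) (show L - 1 - b < L by omega) hab
    omega
  · have := hf.2 (L - 1 - (j + 1)) (by omega)
    rwa [show L - 1 - (j + 1) + 1 = L - 1 - j by omega, adj_comm] at this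

theorem IsPathSeq.cons (hf : G.IsPathSeq L f) (ha : ∀ j < L, f j ≠ a) (hadj : G.Adj a (f 0)) :
    G.IsPathSeq (L + 1) (fun | 0 => a | j + 1 => f j) := by
  refine ⟨?_, ?_⟩
  · rintro (_ | i) hi (_ | j) hj hij
    · rfl
    · exact absurd hij.symm (ha j (Nat.succ_lt_succ_iff.1 hj))
    · exact absurd hij (ha i (Nat.succ_lt_succ_iff.1 hi))
    · rw [hf.1 (Nat.succ_lt_succ_iff.1 hi) (Nat.succ_lt_succ_iff.1 hj) hij]
  · rintro (_ | j) hj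
    · exact hadj
    · exact hf.2 j (by omega)

theorem IsCycleSeq.isPathSeq_rotate (hc : G.IsCycleSeq L c) (m : ℕ) :
    G.IsPathSeq L (fun t => c ((m + t) % L)) := by
  refine ⟨fun a ha b hb hab => ?_, fun j hj => ?_⟩
  · simp only [Set.mem_Iio] at ha hb
    have hmod := hc.1 (Nat.mod_lt _ (by omega)) (Nat.mod_lt _ (by omega)) hab
    have := Nat.ModEq.add_left_cancel' m hmod
    rwa [Nat.ModEq, Nat.mod_eq_of_lt ha, Nat.mod_eq_of_lt hb] at this
  · have := hc.2 ((m + j) % L) (Nat.mod_lt _ (by omega))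
    rwa [Nat.mod_add_mod, add_assoc] at this

theorem IsPathSeq.isCycleSeq_of_adj (hf : G.IsPathSeq L f) (hi : i + 1 < L)
    (h0 : G.Adj (f 0) (f (i + 1))) (hL : G.Adj (f (L - 1)) (f i)) :
    G.IsCycleSeq L (fun j => if j ≤ i then f j else f (L + i - j)) := by
  -- the cycle `f 0, …, f i, f (L - 1), f (L - 2), …, f (i + 1)`
  refine ⟨fun a ha b hb hab => ?_, fun j hj => ?_⟩
  · simp only [Set.mem_Iio] at ha hb
    dsimp only at hab
    split_ifs at hab with h1 h2 h2
    · exact hf.1 (show a < L by omega) (show b < L by omega) hab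
    all_goals have := hf.1 (by simp; omega) (by simp; omega) hab; omega
  · dsimp only
    rcases lt_or_ge (j + 1) L with hjL | hjL
    · rw [Nat.mod_eq_of_lt hjL]
      rcases lt_trichotomy j i with h | rfl | h
      · rw [if_pos h.le, if_pos (Nat.succ_le_of_lt h)]
        exact hf.2 j hjL
      · rw [if_pos le_rfl, if_neg (by omega), show L + j - (j + 1) = L - 1 by omega]
        exact hL.symm
      · rw [if_neg (by omega), if_neg (by omega)]
        have := hf.2 (L + i - (j + 1)) (by omega)
        rwa [show L + i - (j + 1) + 1 = L + i - j by omega, adj_comm] at this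
    · rw [show j + 1 = L by omega, Nat.mod_self, if_neg (by omega), if_pos (Nat.zero_le _),
        show L + i - j = i + 1 by omega]
      exact h0.symm

theorem IsPathSeq.exists_eq_of_adj_head (hf : G.IsPathSeq L f)
    (hmax : ∀ g, ¬ G.IsPathSeq (L + 1) g) (hu : G.Adj (f 0) u) : ∃ j < L, f j = u := by
  by_contra! hu'
  exact hmax _ (hf.cons hu' hu.symm)

theorem IsPathSeq.exists_eq_of_adj_last (hf : G.IsPathSeq L f)
    (hmax : ∀ g, ¬ G.IsPathSeq (L + 1) g) (hu : G.Adj (f (L - 1)) u) : ∃ j < L, f j = u := by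
  obtain ⟨j, hj, rfl⟩ := hf.reverse.exists_eq_of_adj_head hmax (by simpa using hu)
  exact ⟨L - 1 - j, by omega, rfl⟩

theorem IsPathSeq.exists_adj_head_adj_last [Fintype V] [DecidableRel G.Adj]
    (hf : G.IsPathSeq L f) (hmax : ∀ g, ¬ G.IsPathSeq (L + 1) g) (hL : 0 < L)
    (hdeg : L ≤ G.degree (f 0) + G.degree (f (L - 1))) :
    ∃ i, i + 1 < L ∧ G.Adj (f 0) (f (i + 1)) ∧ G.Adj (f (L - 1)) (f i) := by
  classical
  set A := (range (L - 1)).filter fun i => G.Adj (f 0) (f (i + 1))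
  set B := (range (L - 1)).filter fun i => G.Adj (f (L - 1)) (f i)
  have hA : G.degree (f 0) ≤ #A := by
    rw [← card_neighborFinset_eq_degree]
    refine (card_le_card fun u hu => ?_).trans (card_image_le (f := fun i => f (i + 1)))
    rw [mem_neighborFinset] at hu
    obtain ⟨_ | j, hj, rfl⟩ := hf.exists_eq_of_adj_head hmax hu
    · exact (G.irrefl hu).elim
    · exact mem_image.2 ⟨j, mem_filter.2 ⟨mem_range.2 (by omega), hu⟩, rfl⟩
  have hB : G.degree (f (L - 1)) ≤ #B := by
    rw [← card_neighborFinset_eq_degree]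
    refine (card_le_card fun u hu => ?_).trans (card_image_le (f := f))
    rw [mem_neighborFinset] at hu
    obtain ⟨j, hj, rfl⟩ := hf.exists_eq_of_adj_last hmax hu
    have hjL : j ≠ L - 1 := by rintro rfl; exact G.irrefl hu
    exact mem_image.2 ⟨j, mem_filter.2 ⟨mem_range.2 (by omega), hu⟩, rfl⟩
  obtain ⟨i, hi⟩ := inter_nonempty_of_card_lt_card_add_card (t := A) (u := B) (filter_subset _ _)
    (filter_subset _ _) (by rw [card_range]; omega)
  simp only [A, B, mem_inter, mem_filter, mem_range] at hi
  exact ⟨i, by omega, hi.1.2, hi.2.2⟩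

theorem IsCycleSeq.exists_isPathSeq_succ [Fintype V] (hc : G.IsCycleSeq L c) (hG : G.Connected)
    (hL : 0 < L) (hLV : L < Fintype.card V) : ∃ g, G.IsPathSeq (L + 1) g := by
  classical
  set S := (range L).image c
  have hS : #S = L := by
    rw [card_image_of_injOn (fun a ha b hb => hc.1 (by simpa using ha) (by simpa using hb)),
      card_range]
  obtain ⟨a, haS⟩ : ∃ a, a ∉ S := by
    by_contra! h
    have := card_le_card (s := univ) fun x _ => h x
    rw [card_univ, hS] at this
    omega
  obtain ⟨⟨⟨b, a'⟩, hba⟩, -, hb, ha'⟩ := (hG.preconnected (c 0) a).some.exists_boundary_dart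
    (S : Set V) (mem_image_of_mem c (mem_range.2 hL)) haS
  simp only [S, coe_image, coe_range, Set.mem_image, Set.mem_Iio] at hb ha'
  obtain ⟨j₀, hj₀, rfl⟩ := hb
  refine ⟨_, (hc.isPathSeq_rotate j₀).cons (fun t _ h => ha' ⟨_, Nat.mod_lt _ hL, h⟩) ?_⟩
  simpa [Nat.mod_eq_of_lt hj₀] using hba.symm

theorem IsPathSeq.exists_isPathSeq_succ [Fintype V] [DecidableRel G.Adj] (hG : G.Connected)
    (hf : G.IsPathSeq L f) (hL : 0 < L) (hLV : L < Fintype.card V)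
    (hdeg : L ≤ G.degree (f 0) + G.degree (f (L - 1))) : ∃ g, G.IsPathSeq (L + 1) g := by
  by_contra! hmax
  obtain ⟨i, hi, h0, hlast⟩ := hf.exists_adj_head_adj_last hmax hL hdeg
  obtain ⟨g, hg⟩ := (hf.isCycleSeq_of_adj hi h0 hlast).exists_isPathSeq_succ hG hL hLV
  exact hmax g hg

theorem Connected.containsPathOn [Fintype V] [DecidableRel G.Adj] (hG : G.Connected)
    (hdeg : ∀ v, k ≤ 2 * G.degree v + 1) (hk : k ≤ Fintype.card V) : ContainsPathOn G k := by
  rcases Nat.eq_zero_or_pos k with rfl | hk₀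
  · exact ⟨Fin.elim0, fun a => a.elim0, fun j h => by omega⟩
  suffices ∀ L, 1 ≤ L → L ≤ k → ∃ f, G.IsPathSeq L f by
    obtain ⟨f, hf⟩ := this k hk₀ le_rfl
    exact hf.containsPathOn
  intro L hL
  induction L, hL using Nat.le_induction with
  | base =>
    intro _
    obtain ⟨v⟩ := hG.nonempty
    exact ⟨_, isPathSeq_one v⟩
  | succ L hL ih =>
    intro hLk
    obtain ⟨f, hf⟩ := ih (by omega)
    have := hdeg (f 0)
    have := hdeg (f (L - 1))
    exact hf.exists_isPathSeq_succ hG (by omega) (by omega) (by omega)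

theorem _root_.ContainsPathOn.map {W : Type*} {H : SimpleGraph W} (φ : G ↪g H)
    (h : ContainsPathOn G k) : ContainsPathOn H k := by
  obtain ⟨p, hp, hadj⟩ := h
  exact ⟨φ ∘ p, φ.injective.comp hp, fun j hj => φ.map_adj_iff.2 (hadj j hj)⟩

theorem containsPathOn_of_forall_le_degree [Fintype V] [DecidableRel G.Adj]
    (hdeg : ∀ v, k ≤ 2 * G.degree v + 1) (v : V) (hv : k ≤ G.degree v + 1) :
    ContainsPathOn G k := by
  classical
  set C := G.connectedComponentMk v
  have hdegC (u : C.supp) : (G.induce C.supp).degree u = G.degree u :=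
    degree_induce_of_neighborSet_subset fun _ hw => C.mem_supp_of_adj_mem_supp u.2 hw
  have hvC : G.degree v < Fintype.card C.supp := by
    rw [← hdegC ⟨v, rfl⟩]
    exact degree_lt_card_verts _
  have hC : (G.induce C.supp).Connected := C.connected_toSimpleGraph
  exact (hC.containsPathOn (fun u => hdegC u ▸ hdeg u) (by omega)).map (Embedding.induce _)

theorem card_edgeFinset_induce_compl_singleton_add_degree [Fintype V] [DecidableEq V]
    [DecidableRel G.Adj] (v : V) : #(G.induce {v}ᶜ).edgeFinset + G.degree v = #G.edgeFinset := by
  have := G.degree_le_card_edgeFinset v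
  rw [card_edgeFinset_induce_compl_singleton, card_edgeFinset_deleteIncidenceSet]
  omega

theorem two_mul_card_edgeFinset_add_le_of_forall_degree [Fintype V] [DecidableRel G.Adj]
    (hdeg : ∀ v, G.degree v + 2 ≤ k) :
    2 * #G.edgeFinset + 2 * Fintype.card V ≤ k * Fintype.card V :=
  calc 2 * #G.edgeFinset + 2 * Fintype.card V = ∑ v, (G.degree v + 2) := by
        rw [sum_add_distrib, sum_degrees_eq_twice_card_edges, sum_const, card_univ, smul_eq_mul,
          mul_comm (Fintype.card V)]
    _ ≤ ∑ _v : V, k := sum_le_sum fun v _ => hdeg v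
    _ = k * Fintype.card V := by rw [sum_const, card_univ, smul_eq_mul, mul_comm]

theorem two_mul_card_edgeFinset_add_le_of_not_containsPathOn [Fintype V] [DecidableRel G.Adj]
    (h : ¬ ContainsPathOn G k) : 2 * #G.edgeFinset + 2 * Fintype.card V ≤ k * Fintype.card V := by
  induction hn : Fintype.card V using Nat.strong_induction_on generalizing V with
  | _ n ih =>
    classical
    by_cases hlow : ∃ v, 2 * G.degree v + 2 ≤ k
    · obtain ⟨v, hv⟩ := hlow
      have hpos : 0 < n := hn ▸ Fintype.card_pos_iff.2 ⟨v⟩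
      have hcard : Fintype.card ({v}ᶜ : Set V) = n - 1 := by
        rw [Fintype.card_compl_set, Set.card_singleton, hn]
      have hdel := ih (n - 1) (by omega) (G := G.induce {v}ᶜ)
        (fun h' => h (h'.map (Embedding.induce _))) hcard
      have hedges := G.card_edgeFinset_induce_compl_singleton_add_degree v
      have hkn : k * (n - 1) + k = k * n := by
        rw [← Nat.mul_add_one, Nat.sub_add_cancel hpos]
      omega
    push Not at hlow
    by_cases hhigh : ∃ v, k ≤ G.degree v + 1
    · obtain ⟨v, hv⟩ := hhigh
      exact absurd (containsPathOn_of_forall_le_degree (fun u => by have := hlow u; omega) v hv) h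
    push Not at hhigh
    exact hn ▸ two_mul_card_edgeFinset_add_le_of_forall_degree hhigh

end SimpleGraph

theorem stmt_2_general (k n : ℕ) (G : SimpleGraph (Fin n))
    (hG : ¬ ContainsPathOn G k) :
    (G.edgeSet.ncard : ℝ) ≤ ((k : ℝ) - 2) * n / 2 := by
  classical
  have h := G.two_mul_card_edgeFinset_add_le_of_not_containsPathOn hG
  rw [Fintype.card_fin] at h
  rw [← SimpleGraph.coe_edgeFinset, Set.ncard_coe_finset]
  have : (2 * #G.edgeFinset + 2 * n : ℝ) ≤ k * n := by exact_mod_cast h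
  linarith

/-- Erdős–Gallai: every `P_k`-free graph on `n` vertices has at most `(k-2)n/2` edges. -/
theorem stmt_2 (k n : ℕ) (hk : 1 ≤ k) (hn : 1 ≤ n) (G : SimpleGraph (Fin n))
    (hG : ¬ ContainsPathOn G k) :
    (G.edgeSet.ncard : ℝ) ≤ ((k : ℝ) - 2) * n / 2 :=
  stmt_2_general k n G hG
end

section
/- Let K_n be edge-colored by c, and let U, W be disjoint vertex subsets with |U| = u ≥ 1 and |W| = w ≥ 1. Suppose there exist representing subgraphs L¹ and L² of (K_n, c) such that U has at least s common neighbors in L¹ and W has at least s + s·u common neighbors in L². Then there exists a representing subgraph L of (K_n, c) in which U has at least s common neighbors and W has at least s common neighbors. -/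
/-! Choose a set S of s common neighbours of U in L¹ and let C be the set of at most
s·u colours on the edges between U and S. Build L by taking the edges of L¹ whose colour lies in
C and the edges of L² whose colour does not; since both graphs use every colour exactly once, so
does L. Then S is still a common neighbourhood of U in L. A common neighbour v of W in L² stays
one in L unless some edge from W to v has a colour in C; as each colour is carried by a single
edge of L², at most |C| ≤ s·u vertices v are lost, leaving at least s. -/

open Finset

/-- `L` is a representing subgraph of `(K_n, c)`: for every (non-loop) edge of `K_n`,
`L` contains exactly one edge of the same color. -/
def IsRepresenting (n : ℕ) (c : Sym2 (Fin n) → ℕ) (L : SimpleGraph (Fin n)) : Prop :=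
  ∀ e : Sym2 (Fin n), ¬ e.IsDiag → ∃! f, f ∈ L.edgeSet ∧ c f = c e

/-- The common neighborhood of the vertex set `U` in the graph `L`. -/
def commonNbrs {n : ℕ} (L : SimpleGraph (Fin n)) (U : Finset (Fin n)) : Set (Fin n) :=
  {v | ∀ u ∈ U, L.Adj u v}

theorem Set.ncard_le_ncard_of_forall_subsingleton {α β : Type*} {s : Set α} {t : Set β}
    (r : α → β → Prop) (hs : ∀ a ∈ s, ∃ b ∈ t, r a b)
    (ht : ∀ b ∈ t, {a ∈ s | r a b}.Subsingleton)
    (hsf : s.Finite := by toFinite_tac) (htf : t.Finite := by toFinite_tac) :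
    s.ncard ≤ t.ncard := by
  obtain ⟨s, rfl⟩ := hsf.exists_finset_coe
  obtain ⟨t, rfl⟩ := htf.exists_finset_coe
  simp only [ncard_coe_finset]
  exact Finset.card_le_card_of_forall_subsingleton r hs ht

namespace SimpleGraph

variable {V κ : Type*}

def colorMix (c : Sym2 V → κ) (C : Set κ) (G H : SimpleGraph V) : SimpleGraph V :=
  fromEdgeSet ({e ∈ G.edgeSet | c e ∈ C} ∪ {e ∈ H.edgeSet | c e ∉ C})

variable {c : Sym2 V → κ} {C : Set κ} {G H : SimpleGraph V}

theorem edgeSet_colorMix :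
    (colorMix c C G H).edgeSet = {e ∈ G.edgeSet | c e ∈ C} ∪ {e ∈ H.edgeSet | c e ∉ C} := by
  rw [colorMix, edgeSet_fromEdgeSet, sdiff_eq_left, Set.disjoint_left]
  rintro e (⟨he, -⟩ | ⟨he, -⟩)
  exacts [G.not_isDiag_of_mem_edgeSet he, H.not_isDiag_of_mem_edgeSet he]

theorem colorMix_adj_of_mem {x y : V} (hc : c s(x, y) ∈ C) (h : G.Adj x y) :
    (colorMix c C G H).Adj x y := by
  rw [← mem_edgeSet, edgeSet_colorMix]
  exact Or.inl ⟨h, hc⟩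

theorem colorMix_adj_of_notMem {x y : V} (hc : c s(x, y) ∉ C) (h : H.Adj x y) :
    (colorMix c C G H).Adj x y := by
  rw [← mem_edgeSet, edgeSet_colorMix]
  exact Or.inr ⟨h, hc⟩

end SimpleGraph

open SimpleGraph

section Representing

variable {n : ℕ} {c : Sym2 (Fin n) → ℕ} {L : SimpleGraph (Fin n)}

theorem IsRepresenting.eq_of_color_eq (hL : IsRepresenting n c L) {f f' : Sym2 (Fin n)}
    (hf : f ∈ L.edgeSet) (hf' : f' ∈ L.edgeSet) (h : c f = c f') : f = f' :=
  (hL f (L.not_isDiag_of_mem_edgeSet hf)).unique ⟨hf, rfl⟩ ⟨hf', h.symm⟩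

theorem IsRepresenting.colorMix {L₁ L₂ : SimpleGraph (Fin n)} (C : Set ℕ)
    (hL₁ : IsRepresenting n c L₁) (hL₂ : IsRepresenting n c L₂) :
    IsRepresenting n c (colorMix c C L₁ L₂) := by
  intro e he
  by_cases hc : c e ∈ C
  · refine (existsUnique_congr fun f => ?_).mp (hL₁ e he)
    rw [edgeSet_colorMix]
    constructor
    · rintro ⟨hf, hfe⟩
      exact ⟨Or.inl ⟨hf, hfe ▸ hc⟩, hfe⟩
    · rintro ⟨hf | ⟨-, hfC⟩, hfe⟩
      exacts [⟨hf.1, hfe⟩, absurd (hfe ▸ hc) hfC]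
  · refine (existsUnique_congr fun f => ?_).mp (hL₂ e he)
    rw [edgeSet_colorMix]
    constructor
    · rintro ⟨hf, hfe⟩
      exact ⟨Or.inr ⟨hf, hfe ▸ hc⟩, hfe⟩
    · rintro ⟨⟨-, hfC⟩ | hf, hfe⟩
      exacts [absurd (hfe ▸ hfC) hc, ⟨hf.1, hfe⟩]

theorem notMem_of_mem_commonNbrs {W : Finset (Fin n)} {v : Fin n} (hv : v ∈ commonNbrs L W) :
    v ∉ W :=
  fun hvW => L.loopless.irrefl v (hv v hvW)

/-- Each colour of `C` is carried by one edge of `L`, which joins `W` to at most one vertex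
outside `W`. -/
theorem IsRepresenting.ncard_commonNbrs_joined_by_color_le (hL : IsRepresenting n c L)
    (W : Finset (Fin n)) (C : Set ℕ) (hC : C.Finite) :
    {v ∈ commonNbrs L W | ∃ x ∈ W, c s(x, v) ∈ C}.ncard ≤ C.ncard := by
  refine Set.ncard_le_ncard_of_forall_subsingleton (fun v k => ∃ x ∈ W, c s(x, v) = k)
    (fun _ ⟨_, x, hx, hxC⟩ => ⟨_, hxC, x, hx, rfl⟩) ?_ (htf := hC)
  rintro k - v ⟨⟨hv, -⟩, x, hx, rfl⟩ v' ⟨⟨hv', -⟩, x', hx', hcol⟩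
  have hedge := hL.eq_of_color_eq (L.mem_edgeSet.2 (hv' x' hx')) (L.mem_edgeSet.2 (hv x hx)) hcol
  rcases Sym2.eq_iff.1 hedge with ⟨-, h⟩ | ⟨-, h⟩
  · exact h.symm
  · exact (notMem_of_mem_commonNbrs hv' (h ▸ hx)).elim

end Representing

section CommonNbrs

variable {n : ℕ} {c : Sym2 (Fin n) → ℕ} {C : Set ℕ} {L₁ L₂ : SimpleGraph (Fin n)}

theorem subset_commonNbrs_colorMix_of_subset_left {U : Finset (Fin n)} {S : Set (Fin n)}
    (hS : S ⊆ commonNbrs L₁ U) (hC : ∀ x ∈ U, ∀ y ∈ S, c s(x, y) ∈ C) :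
    S ⊆ commonNbrs (colorMix c C L₁ L₂) U :=
  fun y hy x hx => colorMix_adj_of_mem (hC x hx y hy) (hS hy x hx)

theorem commonNbrs_sdiff_joined_by_color_subset_commonNbrs_colorMix (W : Finset (Fin n)) :
    commonNbrs L₂ W \ {v ∈ commonNbrs L₂ W | ∃ x ∈ W, c s(x, v) ∈ C} ⊆
      commonNbrs (colorMix c C L₁ L₂) W :=
  fun _ ⟨hv, hvC⟩ x hx => colorMix_adj_of_notMem (fun hxC => hvC ⟨hv, x, hx, hxC⟩) (hv x hx)

end CommonNbrs

theorem stmt_3_general (n u s : ℕ)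
    (c : Sym2 (Fin n) → ℕ) (U W : Finset (Fin n))
    (hU : U.card = u)
    (L₁ L₂ : SimpleGraph (Fin n))
    (hL₁ : IsRepresenting n c L₁) (hL₂ : IsRepresenting n c L₂)
    (h₁ : s ≤ (commonNbrs L₁ U).ncard)
    (h₂ : s + s * u ≤ (commonNbrs L₂ W).ncard) :
    ∃ L : SimpleGraph (Fin n), IsRepresenting n c L ∧
      s ≤ (commonNbrs L U).ncard ∧ s ≤ (commonNbrs L W).ncard := by
  obtain ⟨S, hSU, rfl⟩ := Set.exists_subset_card_eq h₁
  set C := (fun p : Fin n × Fin n => c s(p.1, p.2)) '' ((U : Set (Fin n)) ×ˢ S)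
  have hC : C.ncard ≤ S.ncard * u :=
    calc C.ncard ≤ ((U : Set (Fin n)) ×ˢ S).ncard := Set.ncard_image_le
      _ = S.ncard * u := by rw [Set.ncard_prod, Set.ncard_coe_finset, hU, mul_comm]
  have hlost := hL₂.ncard_commonNbrs_joined_by_color_le W C (Set.toFinite C)
  refine ⟨colorMix c C L₁ L₂, hL₁.colorMix C hL₂, ?_, ?_⟩
  · exact Set.ncard_le_ncard
      (subset_commonNbrs_colorMix_of_subset_left hSU fun x hx y hy => ⟨(x, y), ⟨hx, hy⟩, rfl⟩)
  · calc S.ncard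
        ≤ (commonNbrs L₂ W).ncard - {v ∈ commonNbrs L₂ W | ∃ x ∈ W, c s(x, v) ∈ C}.ncard := by
          omega
      _ ≤ _ := Set.le_ncard_sdiff _ _
      _ ≤ _ := Set.ncard_le_ncard (commonNbrs_sdiff_joined_by_color_subset_commonNbrs_colorMix W)

theorem stmt_3 (n u w s : ℕ) (hu : 1 ≤ u) (hw : 1 ≤ w)
    (c : Sym2 (Fin n) → ℕ) (U W : Finset (Fin n)) (hUW : Disjoint U W)
    (hU : U.card = u) (hW : W.card = w)
    (L₁ L₂ : SimpleGraph (Fin n))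
    (hL₁ : IsRepresenting n c L₁) (hL₂ : IsRepresenting n c L₂)
    (h₁ : s ≤ (commonNbrs L₁ U).ncard)
    (h₂ : s + s * u ≤ (commonNbrs L₂ W).ncard) :
    ∃ L : SimpleGraph (Fin n), IsRepresenting n c L ∧
      s ≤ (commonNbrs L U).ncard ∧ s ≤ (commonNbrs L W).ncard :=
  stmt_3_general n u s c U W hU L₁ L₂ hL₁ hL₂ h₁ h₂
end

section
/- Let F = ∪_{i=1}^k P_{t_i} be a linear forest with k ≥ 2 and t_i ≥ 2 for all i, with f = |V(F)| = Σ t_i. Let F₁ = ∪_{i∈L} P_{t_i} for some L ⊆ [k] with Σ_{i∈L} ⌊t_i/2⌋ ≥ 2, and F₂ = F − F₁. Let G be an F-free graph on n vertices containing a copy of F₁, and suppose e(G) − binom(|V(F₁)|, 2) − ex(n − |V(F₁)|, F₂) ≥ (Σ_{i∈L} ⌊t_i/2⌋ − 7/4)·n. Then for n sufficiently large, every copy of F₁ in G contains a vertex subset U of size Σ_{i∈L} ⌊t_i/2⌋ − 1 whose common neighborhood in V(G) ∖ U has size at least 2f² + 8f. -/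
open Finset

/-- `G` contains the linear forest whose components are paths on `t i` vertices, `i : ι`:
there are pairwise-disjoint paths in `G`, one on `t i` vertices for each `i`. -/
def ContainsLF {V : Type*} {ι : Type*} (G : SimpleGraph V) (t : ι → ℕ) : Prop :=
  ∃ p : (i : ι) → Fin (t i) → V,
    Function.Injective (fun q : Σ i, Fin (t i) => p q.1 q.2) ∧
    ∀ (i : ι) (j : ℕ) (h : j + 1 < t i),
      G.Adj (p i ⟨j, Nat.lt_of_succ_lt h⟩) (p i ⟨j + 1, h⟩)

/-- Turán number of the linear forest with path orders `t i` on `m` vertices. -/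
noncomputable def exLF (m : ℕ) {ι : Type*} (t : ι → ℕ) : ℕ :=
  sSup {N | ∃ G : SimpleGraph (Fin m), ¬ ContainsLF G t ∧ G.edgeSet.ncard = N}

/-!
Let `P` be the vertex set of the copy of `F₁`, `f₁ = |P|` and `s = Σ_{i ∈ L} ⌊t_i/2⌋`. Since `G` is
`F`-free, `G - P` is `F₂`-free, so at most `C(f₁, 2) + ex(n - f₁, F₂)` edges lie inside `P` or
inside its complement, and the hypothesis leaves at least `(s - 7/4) n` edges between them.
Vertices with at most `s - 2` neighbours in `P` carry at most `(s - 2) n` of these, so at least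
`n / (4 f₁)` vertices outside `P` have `s - 1` neighbours in `P`. Each of them picks an
`(s - 1)`-subset of its neighbourhood in `P`; by pigeonhole one of the `C(f₁, s - 1)` subsets is
picked by at least `n / (4 f₁ C(f₁, s - 1)) ≥ 2f² + 8f` vertices.
-/

open Finset SimpleGraph Function

namespace ContainsLF

variable {V W ι : Type*} {t : ι → ℕ}

theorem map {G : SimpleGraph V} {H : SimpleGraph W} (f : G ↪g H) (h : ContainsLF G t) :
    ContainsLF H t := by
  obtain ⟨p, hp_inj, hp_adj⟩ := h
  exact ⟨fun i j => f (p i j), f.injective.comp hp_inj,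
    fun i j hj => f.map_adj_iff.2 (hp_adj i j hj)⟩

theorem of_induce_compl {G : SimpleGraph V} {L : Finset ι} {S : Set V}
    (p : (i : {i // i ∈ L}) → Fin (t i.1) → V)
    (hp_inj : Injective fun q : Σ i : {i // i ∈ L}, Fin (t i.1) => p q.1 q.2)
    (hp_adj : ∀ (i : {i // i ∈ L}) (j : ℕ) (h : j + 1 < t i.1),
      G.Adj (p i ⟨j, Nat.lt_of_succ_lt h⟩) (p i ⟨j + 1, h⟩))
    (hpS : ∀ i j, p i j ∈ S) (h : ContainsLF (G.induce Sᶜ) fun i : {i // i ∉ L} => t i.1) :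
    ContainsLF G t := by
  classical
  obtain ⟨q, hq_inj, hq_adj⟩ := h
  refine ⟨fun i => if hi : i ∈ L then p ⟨i, hi⟩ else fun j => q ⟨i, hi⟩ j, ?_, fun i j hj => ?_⟩
  · rintro ⟨i₁, j₁⟩ ⟨i₂, j₂⟩ h
    by_cases h₁ : i₁ ∈ L <;> by_cases h₂ : i₂ ∈ L <;>
      simp only [h₁, h₂, dite_true, dite_false] at h
    · exact congrArg (Sigma.map Subtype.val fun _ j => j :
        (Σ i : {i // i ∈ L}, Fin (t i.1)) → Σ i, Fin (t i))
        (hp_inj (a₁ := ⟨⟨i₁, h₁⟩, j₁⟩) (a₂ := ⟨⟨i₂, h₂⟩, j₂⟩) h)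
    · exact absurd (h ▸ hpS _ _) (q _ _).2
    · exact absurd (h ▸ hpS _ _) (q _ _).2
    · exact congrArg (Sigma.map Subtype.val fun _ j => j :
        (Σ i : {i // i ∉ L}, Fin (t i.1)) → Σ i, Fin (t i))
        (hq_inj (a₁ := ⟨⟨i₁, h₁⟩, j₁⟩) (a₂ := ⟨⟨i₂, h₂⟩, j₂⟩) (Subtype.ext h))
  · by_cases hi : i ∈ L
    · simpa [hi] using hp_adj ⟨i, hi⟩ j hj
    · simpa [hi] using hq_adj ⟨i, hi⟩ j hj

end ContainsLF

theorem card_edgeFinset_le_exLF {W ι : Type*} [Fintype W] {t : ι → ℕ} {H : SimpleGraph W}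
    [Fintype H.edgeSet] (hH : ¬ ContainsLF H t) : #H.edgeFinset ≤ exLF (Fintype.card W) t := by
  classical
  let e := Fintype.equivFin W
  have hfree : ¬ ContainsLF (H.map e.toEmbedding) t := fun h =>
    hH (h.map (Iso.map e H).symm.toEmbedding)
  rw [(Iso.map e H).card_edgeFinset_eq, ← Set.ncard_coe_finset, coe_edgeFinset]
  refine le_csSup ⟨(Fintype.card W).choose 2, ?_⟩ ⟨_, hfree, rfl⟩
  rintro _ ⟨Γ, -, rfl⟩
  rw [← coe_edgeFinset, Set.ncard_coe_finset]
  simpa using Γ.card_edgeFinset_le_card_choose_two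

theorem SimpleGraph.card_edgeFinset_le_card_induce_add_card_interedges {V : Type*} [Fintype V]
    [DecidableEq V] (G : SimpleGraph V) [DecidableRel G.Adj] (P : Finset V) :
    #G.edgeFinset ≤ #(G.induce (P : Set V)).edgeFinset + #(G.interedges Pᶜ P) +
      #(G.induce (↑Pᶜ : Set V)).edgeFinset := by
  have hcover : G.edgeFinset ⊆ G.edgeFinset ∩ P.sym2 ∪ (G.interedges Pᶜ P).image
      (fun e => s(e.1, e.2)) ∪ G.edgeFinset ∩ Pᶜ.sym2 := by
    intro e he
    induction e using Sym2.ind with | h a b => ?_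
    rw [mem_edgeFinset, mem_edgeSet] at he
    by_cases ha : a ∈ P <;> by_cases hb : b ∈ P
    · simp [ha, hb, he]
    · refine mem_union_left _ (mem_union_right _ (mem_image.2 ⟨(b, a), ?_, Sym2.eq_swap⟩))
      simp [mem_interedges_iff, ha, hb, he.symm]
    · refine mem_union_left _ (mem_union_right _ (mem_image.2 ⟨(a, b), ?_, rfl⟩))
      simp [mem_interedges_iff, ha, hb, he]
    · simp [ha, hb, he]
  have hinduce (Q : Finset V) :
      #(G.induce (Q : Set V)).edgeFinset = #(G.edgeFinset ∩ Q.sym2) := by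
    have := congrArg card (map_edgeFinset_induce (G := G) (s := (Q : Set V)))
    rw [card_map, Finset.toFinset_coe] at this
    -- `convert` reconciles the two `Fintype` instances on `↥(Q : Set V)`.
    convert this
  calc #G.edgeFinset
      ≤ #(G.edgeFinset ∩ P.sym2) + #((G.interedges Pᶜ P).image fun e => s(e.1, e.2)) +
          #(G.edgeFinset ∩ Pᶜ.sym2) :=
        (card_le_card hcover).trans <| (card_union_le _ _).trans <|
          Nat.add_le_add_right (card_union_le _ _) _
    _ ≤ _ := by
      rw [hinduce, hinduce]
      gcongr
      exact card_image_le

theorem SimpleGraph.card_edgeFinset_le_choose_add_card_interedges_add_exLF {V ι : Type*}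
    [Fintype V] [DecidableEq V] (G : SimpleGraph V) [DecidableRel G.Adj] (P : Finset V)
    {t : ι → ℕ} (hfree : ¬ ContainsLF (G.induce (↑Pᶜ : Set V)) t) :
    #G.edgeFinset ≤ (#P).choose 2 + #(G.interedges Pᶜ P) + exLF (Fintype.card V - #P) t := by
  have hinside : #(G.induce (P : Set V)).edgeFinset ≤ (#P).choose 2 :=
    card_edgeFinset_le_card_choose_two.trans_eq (by simp)
  have houtside : #(G.induce (↑Pᶜ : Set V)).edgeFinset ≤ exLF (Fintype.card V - #P) t :=
    (card_edgeFinset_le_exLF hfree).trans_eq <| by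
      simp only [coe_sort_coe, Fintype.card_coe, card_compl]
  have := G.card_edgeFinset_le_card_induce_add_card_interedges P
  omega

theorem Rel.card_interedges_le_card_filter_mul_add {α β : Type*} (r : α → β → Prop)
    [∀ a, DecidablePred (r a)] (s : Finset α) (t : Finset β) (d : ℕ) :
    #(Rel.interedges r s t) ≤ #{a ∈ s | d < #{b ∈ t | r a b}} * #t + #s * d := by
  have hsum : #(Rel.interedges r s t) = ∑ a ∈ s, #{b ∈ t | r a b} := by
    simp only [Rel.interedges, card_filter, sum_product]
  rw [hsum, ← sum_filter_add_sum_filter_not s fun a => d < #{b ∈ t | r a b}]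
  gcongr ?_ + ?_
  · exact (sum_le_card_nsmul _ _ _ fun a _ => card_filter_le _ _).trans_eq (smul_eq_mul _ _)
  · refine (sum_le_card_nsmul _ _ d fun a ha => not_lt.1 (mem_filter.1 ha).2).trans ?_
    rw [smul_eq_mul]
    gcongr
    exact filter_subset _ _

theorem Finset.exists_subset_card_eq_le_card_filter_forall {α β : Type*} [DecidableEq α]
    {R : β → α → Prop} [∀ b, DecidablePred (R b)] {s : Finset α} {B : Finset β} {r M : ℕ}
    (hr : r ≤ #s) (hB : ∀ b ∈ B, r ≤ #{a ∈ s | R b a}) (hcard : (#s).choose r * M ≤ #B) :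
    ∃ U ⊆ s, #U = r ∧ M ≤ #{b ∈ B | ∀ a ∈ U, R b a} := by
  have hchoice : ∀ b ∈ B, ∃ U ∈ s.powersetCard r, ∀ a ∈ U, R b a := fun b hb => by
    obtain ⟨U, hU, hUcard⟩ := exists_subset_card_eq (hB b hb)
    exact ⟨U, mem_powersetCard.2 ⟨hU.trans (filter_subset _ _), hUcard⟩,
      fun a ha => (mem_filter.1 (hU ha)).2⟩
  choose! g hg hgR using hchoice
  obtain ⟨U, hU, hfiber⟩ := exists_le_card_fiber_of_mul_le_card_of_maps_to hg
    (powersetCard_nonempty.2 hr) (by rwa [card_powersetCard])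
  obtain ⟨hUs, hUcard⟩ := mem_powersetCard.1 hU
  refine ⟨U, hUs, hUcard, hfiber.trans (card_le_card fun b hb => ?_)⟩
  obtain ⟨hbB, rfl⟩ := mem_filter.1 hb
  exact mem_filter.2 ⟨hbB, hgR b hbB⟩

theorem stmt_6_general (k : ℕ) (t : Fin k → ℕ)
    (L : Finset (Fin k)) (hL : 2 ≤ ∑ i ∈ L, t i / 2) :
    ∃ N : ℕ, ∀ n : ℕ, N ≤ n → ∀ G : SimpleGraph (Fin n),
      -- `G` is `F`-free
      ¬ ContainsLF G t →
      -- the edge-count hypothesis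
      ((((∑ i ∈ L, t i / 2 : ℕ) : ℝ) - 7/4) * n ≤
        (G.edgeSet.ncard : ℝ) - (Nat.choose (∑ i ∈ L, t i) 2 : ℝ) -
          (exLF (n - ∑ i ∈ L, t i) (fun i : {i // i ∉ L} => t i.1) : ℝ)) →
      -- every copy of `F₁ = ∪_{i ∈ L} P_{t_i}` in `G` ...
      ∀ p : (i : {i // i ∈ L}) → Fin (t i.1) → Fin n,
        Function.Injective
          (fun q : Σ i : {i // i ∈ L}, Fin (t i.1) => p q.1 q.2) →
        (∀ (i : {i // i ∈ L}) (j : ℕ) (h : j + 1 < t i.1),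
          G.Adj (p i ⟨j, Nat.lt_of_succ_lt h⟩) (p i ⟨j + 1, h⟩)) →
        -- ... contains a set `U` of size `Σ_{i∈L} ⌊t_i/2⌋ - 1` whose common
        -- neighborhood in `V(G) ∖ U` has at least `2f² + 8f` vertices
        ∃ U : Finset (Fin n),
          (∀ x ∈ U, ∃ i j, p i j = x) ∧
          U.card = (∑ i ∈ L, t i / 2) - 1 ∧
          2 * (∑ i, t i)^2 + 8 * (∑ i, t i) ≤
            {v : Fin n | v ∉ U ∧ ∀ u ∈ U, G.Adj u v}.ncard := by
  classical
  set s₁ := ∑ i ∈ L, t i / 2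
  set f₁ := ∑ i ∈ L, t i
  set M := 2 * (∑ i, t i) ^ 2 + 8 * ∑ i, t i
  refine ⟨4 * f₁ * (f₁.choose (s₁ - 1) * M), fun n hn G hGF hEdge p hp_inj hp_adj => ?_⟩
  set P : Finset (Fin n) := univ.image fun q : Σ i : {i // i ∈ L}, Fin (t i.1) => p q.1 q.2
  have hP : #P = f₁ := by
    rw [card_image_of_injective _ hp_inj, card_univ, Fintype.card_sigma]
    simpa [f₁] using sum_attach L t
  have hs₁f₁ : s₁ ≤ f₁ := sum_le_sum fun i _ => Nat.div_le_self _ _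
  have hfree : ¬ ContainsLF (G.induce (↑Pᶜ : Set (Fin n))) fun i : {i // i ∉ L} => t i.1 :=
    fun h => hGF <| ContainsLF.of_induce_compl p hp_inj hp_adj (S := P)
      (fun i j => mem_image.2 ⟨⟨i, j⟩, mem_univ _, rfl⟩) (by rwa [← coe_compl])
  have hcross : ((s₁ : ℝ) - 7 / 4) * n ≤ #(G.interedges Pᶜ P) := by
    have hedges := G.card_edgeFinset_le_choose_add_card_interedges_add_exLF P hfree
    rw [hP, Fintype.card_fin, ← Set.ncard_coe_finset, coe_edgeFinset] at hedges
    have : (G.edgeSet.ncard : ℝ) ≤ f₁.choose 2 + #(G.interedges Pᶜ P) +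
        exLF (n - f₁) (fun i : {i // i ∉ L} => t i.1) := by exact_mod_cast hedges
    linarith
  set B := {v ∈ Pᶜ | s₁ - 2 < #{u ∈ P | G.Adj v u}}
  have hB : n ≤ 4 * (#B * f₁) := by
    have hcount := Rel.card_interedges_le_card_filter_mul_add G.Adj Pᶜ P (s₁ - 2)
    have hPc : #Pᶜ ≤ n := (card_le_univ _).trans_eq (Fintype.card_fin n)
    rw [hP] at hcount
    have : (#(G.interedges Pᶜ P) : ℝ) ≤ #B * f₁ + n * (s₁ - 2) := by
      rw [← Nat.cast_ofNat, ← Nat.cast_sub hL]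
      exact_mod_cast hcount.trans (by gcongr)
    exact_mod_cast (by linarith : (n : ℝ) ≤ 4 * (#B * f₁))
  obtain ⟨U, hUP, hUcard, hUB⟩ := exists_subset_card_eq_le_card_filter_forall
    (R := G.Adj) (s := P) (B := B) (r := s₁ - 1) (M := M) (by omega)
    (fun v hv => by have := (mem_filter.1 hv).2; omega)
    (by rw [hP]; nlinarith)
  refine ⟨U, fun x hx => ?_, hUcard, hUB.trans ?_⟩
  · obtain ⟨q, -, rfl⟩ := mem_image.1 (hUP hx)
    exact ⟨q.1, q.2, rfl⟩
  · rw [← Set.ncard_coe_finset]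
    refine Set.ncard_le_ncard (fun v hv => ?_) (Set.toFinite _)
    simp only [mem_coe, mem_filter] at hv
    obtain ⟨hvB, hvU⟩ := hv
    exact ⟨fun hU => (mem_compl.1 (mem_filter.1 hvB).1) (hUP hU), fun u hu => (hvU u hu).symm⟩

theorem stmt_6 (k : ℕ) (hk : 2 ≤ k) (t : Fin k → ℕ) (ht : ∀ i, 2 ≤ t i)
    (L : Finset (Fin k)) (hL : 2 ≤ ∑ i ∈ L, t i / 2) :
    ∃ N : ℕ, ∀ n : ℕ, N ≤ n → ∀ G : SimpleGraph (Fin n),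
      -- `G` is `F`-free
      ¬ ContainsLF G t →
      -- the edge-count hypothesis
      ((((∑ i ∈ L, t i / 2 : ℕ) : ℝ) - 7/4) * n ≤
        (G.edgeSet.ncard : ℝ) - (Nat.choose (∑ i ∈ L, t i) 2 : ℝ) -
          (exLF (n - ∑ i ∈ L, t i) (fun i : {i // i ∉ L} => t i.1) : ℝ)) →
      -- every copy of `F₁ = ∪_{i ∈ L} P_{t_i}` in `G` ...
      ∀ p : (i : {i // i ∈ L}) → Fin (t i.1) → Fin n,
        Function.Injective
          (fun q : Σ i : {i // i ∈ L}, Fin (t i.1) => p q.1 q.2) →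
        (∀ (i : {i // i ∈ L}) (j : ℕ) (h : j + 1 < t i.1),
          G.Adj (p i ⟨j, Nat.lt_of_succ_lt h⟩) (p i ⟨j + 1, h⟩)) →
        -- ... contains a set `U` of size `Σ_{i∈L} ⌊t_i/2⌋ - 1` whose common
        -- neighborhood in `V(G) ∖ U` has at least `2f² + 8f` vertices
        ∃ U : Finset (Fin n),
          (∀ x ∈ U, ∃ i j, p i j = x) ∧
          U.card = (∑ i ∈ L, t i / 2) - 1 ∧
          2 * (∑ i, t i)^2 + 8 * (∑ i, t i) ≤
            {v : Fin n | v ∉ U ∧ ∀ u ∈ U, G.Adj u v}.ncard :=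
  stmt_6_general k t L hL
end

section
/- Let F = ∪_{i=1}^k P_{t_i} be a linear forest with k ≥ 2, t_i ≥ 2 for all i, and at least one t_i even. Set s = Σ_{i=1}^k ⌊t_i/2⌋. Then for all sufficiently large n, there exists an edge-coloring of K_n with binom(s−2, 2) + (s−2)(n−s+2) + 1 + ε colors containing no rainbow copy of F, where ε = 1 if exactly one t_i is even and ε = 0 if at least two t_i are even. (Lower bound construction for AR(n,F).) -/
/-!
Let `U` be the first `s - 2` vertices. Edges meeting `U` get pairwise distinct colours, the edges
inside `Uᶜ` share the colour `0`, except one edge `e₀` coloured `ε`. A path on `t` vertices with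
`m` of them in `U` and `e` edges inside `Uᶜ` satisfies `t - 1 ≤ 2m + e`, since every other edge has
an endpoint in `U`; when `t` is even and `e = 0` this improves to `t ≤ 2m` by parity. In a rainbow
copy of the forest at most `1 + ε` edges lie inside `Uᶜ`, so summing over the paths gives
`2s ≤ 2(s - 2) + (1 + ε) + min (1 + ε) #{i | Even (t i)}`, which the choice of `ε` rules out.
-/

open Finset

/-- Number of colors used by the edge-coloring `c` of `K_n`. -/
def colorCount (n : ℕ) (c : Sym2 (Fin n) → ℕ) : ℕ :=
  ((Finset.univ.filter fun e : Sym2 (Fin n) => ¬ e.IsDiag).image c).card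

/-- `K_n` colored by `c` contains a rainbow copy of the linear forest
with path orders `t i`, `i : ι`: pairwise-disjoint paths all of whose
edges receive pairwise distinct colors. -/
def RainbowLF (n : ℕ) (c : Sym2 (Fin n) → ℕ) {ι : Type*} (t : ι → ℕ) : Prop :=
  ∃ p : (i : ι) → Fin (t i) → Fin n,
    Function.Injective (fun q : Σ i, Fin (t i) => p q.1 q.2) ∧
    Function.Injective (fun q : Σ i : ι, {j : ℕ // j + 1 < t i} =>
      c s(p q.1 ⟨q.2.1, Nat.lt_of_succ_lt q.2.2⟩, p q.1 ⟨q.2.1 + 1, q.2.2⟩))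

theorem card_pair_zero_of_le_one {ε : ℕ} (hε : ε ≤ 1) : #({ε, 0} : Finset ℕ) = 1 + ε := by
  interval_cases ε <;> rfl

theorem Finset.card_sym2_filter_not_isDiag {α : Type*} [DecidableEq α] (s : Finset α) :
    #{e ∈ s.sym2 | ¬e.IsDiag} = (#s).choose 2 := by
  rw [sym2_eq_image, Sym2.filter_image_mk_not_isDiag, Sym2.card_image_offDiag]

theorem Nat.add_choose_two (a b : ℕ) : (a + b).choose 2 = a.choose 2 + a * b + b.choose 2 := by
  induction b with
  | zero => simp
  | succ b ih =>
    rw [← add_assoc, Nat.choose_succ_succ, Nat.choose_one_right, ih, Nat.choose_succ_succ,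
      Nat.choose_one_right]
    ring

theorem le_two_mul_card_mem_add_card_avoiding {V : Type*} [DecidableEq V] (U : Finset V) {r : ℕ}
    (q : Fin (r + 1) → V) :
    r ≤ 2 * #{x | q x ∈ U} + #{j : Fin r | q j.castSucc ∉ U ∧ q j.succ ∉ U} := by
  have hcast : #{j : Fin r | q j.castSucc ∈ U} ≤ #{x | q x ∈ U} :=
    card_le_card_of_injOn Fin.castSucc (fun _ => by simp) (Fin.castSucc_injective r).injOn
  have hsucc : #{j : Fin r | q j.succ ∈ U} ≤ #{x | q x ∈ U} :=
    card_le_card_of_injOn Fin.succ (fun _ => by simp) (Fin.succ_injective r).injOn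
  have hmeet : #{j : Fin r | q j.castSucc ∈ U ∨ q j.succ ∈ U} ≤ 2 * #{x | q x ∈ U} := by
    rw [filter_or]
    exact (card_union_le _ _).trans (by omega)
  have hsplit := card_filter_add_card_filter_not (s := (univ : Finset (Fin r)))
    (fun j => q j.castSucc ∈ U ∨ q j.succ ∈ U)
  simp only [not_or, card_univ, Fintype.card_fin] at hsplit
  omega

theorem RainbowLF.exists_fin_succ {n : ℕ} {c : Sym2 (Fin n) → ℕ} {ι : Type*} {t : ι → ℕ}
    (h : RainbowLF n c t) (ht : ∀ i, 1 ≤ t i) :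
    ∃ q : (i : ι) → Fin (t i - 1 + 1) → Fin n,
      Function.Injective (fun x : Σ i, Fin (t i - 1 + 1) => q x.1 x.2) ∧
      Function.Injective (fun x : Σ i, Fin (t i - 1) =>
        c s(q x.1 x.2.castSucc, q x.1 x.2.succ)) := by
  obtain ⟨p, hp, hc⟩ := h
  have hti (i : ι) : t i - 1 + 1 = t i := Nat.sub_add_cancel (ht i)
  refine ⟨fun i x => p i (x.cast (hti i)), ?_, ?_⟩
  · rintro ⟨i, x⟩ ⟨i', x'⟩ hxx
    obtain ⟨rfl, hx⟩ := Sigma.mk.inj_iff.mp (hp hxx)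
    simpa [Fin.ext_iff] using hx
  · rintro ⟨i, j⟩ ⟨i', j'⟩ hjj
    have hlt (i : ι) (j : Fin (t i - 1)) : j.val + 1 < t i := by omega
    obtain ⟨rfl, hj⟩ := Sigma.mk.inj_iff.mp
      (hc (a₁ := ⟨i, ⟨j, hlt i j⟩⟩) (a₂ := ⟨i', ⟨j', hlt i' j'⟩⟩) hjj)
    simpa [Fin.ext_iff] using hj

theorem two_mul_sum_half_le_of_rainbow {ι V : Type*} [Fintype ι] [DecidableEq V] {r : ι → ℕ}
    {q : (i : ι) → Fin (r i + 1) → V}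
    (hq : Function.Injective fun x : Σ i, Fin (r i + 1) => q x.1 x.2) {c : Sym2 V → ℕ}
    (hc : Function.Injective fun x : Σ i, Fin (r i) => c s(q x.1 x.2.castSucc, q x.1 x.2.succ))
    (U : Finset V) (A : Finset ℕ) (hA : ∀ a b, a ∉ U → b ∉ U → c s(a, b) ∈ A) :
    2 * ∑ i, (r i + 1) / 2 ≤ 2 * #U + #A + min #A #{i | Even (r i + 1)} := by
  set m : ι → ℕ := fun i => #{x | q i x ∈ U}
  set e : ι → ℕ := fun i => #{j : Fin (r i) | q i j.castSucc ∉ U ∧ q i j.succ ∉ U}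
  have hm : ∑ i, m i ≤ #U := by
    rw [← card_sigma]
    exact card_le_card_of_injOn _ (fun x hx => by simpa using hx) hq.injOn
  have he : ∑ i, e i ≤ #A := by
    rw [← card_sigma]
    refine card_le_card_of_injOn _ (fun x hx => ?_) hc.injOn
    obtain ⟨-, hout⟩ := mem_filter.mp (mem_sigma.mp hx).2
    exact hA _ _ hout.1 hout.2
  have hXe : #{i | Even (r i + 1) ∧ e i ≠ 0} ≤ ∑ i, e i :=
    calc #{i | Even (r i + 1) ∧ e i ≠ 0} = ∑ i ∈ {i | Even (r i + 1) ∧ e i ≠ 0}, 1 :=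
          card_eq_sum_ones _
      _ ≤ ∑ i ∈ {i | Even (r i + 1) ∧ e i ≠ 0}, e i :=
          sum_le_sum fun i hi => Nat.one_le_iff_ne_zero.mpr (mem_filter.mp hi).2.2
      _ ≤ ∑ i, e i := sum_le_sum_of_subset (filter_subset _ _)
  have hXeven : #{i | Even (r i + 1) ∧ e i ≠ 0} ≤ #{i | Even (r i + 1)} :=
    card_le_card (monotone_filter_right _ fun _ _ => And.left)
  have hpath (i : ι) :
      2 * ((r i + 1) / 2) ≤ 2 * m i + e i + if Even (r i + 1) ∧ e i ≠ 0 then 1 else 0 := by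
    have : r i ≤ 2 * m i + e i := le_two_mul_card_mem_add_card_avoiding U (q i)
    simp only [Nat.even_iff]
    split_ifs <;> omega
  have hsum : 2 * ∑ i, (r i + 1) / 2 ≤
      2 * ∑ i, m i + ∑ i, e i + #{i | Even (r i + 1) ∧ e i ≠ 0} := by
    rw [card_filter, mul_sum, mul_sum, ← sum_add_distrib, ← sum_add_distrib]
    exact sum_le_sum fun i _ => hpath i
  omega

section Coloring

variable {V : Type*} [Fintype V] [DecidableEq V]

theorem card_filter_not_isDiag_not_mem_sym2_compl (U : Finset V) :
    #(univ.filter fun e : Sym2 V => ¬e.IsDiag ∧ e ∉ Uᶜ.sym2) =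
      (#U).choose 2 + #U * (Fintype.card V - #U) := by
  have hsplit : (univ.filter fun e : Sym2 V => ¬e.IsDiag ∧ e ∉ Uᶜ.sym2) =
      {e ∈ (univ : Finset V).sym2 | ¬e.IsDiag} \ {e ∈ Uᶜ.sym2 | ¬e.IsDiag} := by
    ext e
    simp only [mem_filter, mem_sdiff, mem_univ, true_and, mem_sym2_iff]
    tauto
  have hsub : {e ∈ Uᶜ.sym2 | ¬e.IsDiag} ⊆ {e ∈ (univ : Finset V).sym2 | ¬e.IsDiag} :=
    filter_subset_filter _ (sym2_mono (subset_univ _))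
  have hchoose := Nat.add_choose_two (#U) (Fintype.card V - #U)
  rw [Nat.add_sub_cancel' (card_le_univ U)] at hchoose
  rw [hsplit, card_sdiff_of_subset hsub, card_sym2_filter_not_isDiag,
    card_sym2_filter_not_isDiag, card_univ, card_compl]
  omega

noncomputable def extremalColoring (U : Finset V) (e₀ : Sym2 V) (ε : ℕ) (e : Sym2 V) : ℕ :=
  if e ∈ Uᶜ.sym2 then if e = e₀ then ε else 0 else Fintype.equivFin (Sym2 V) e + 2

theorem extremalColoring_mem_of_not_mem (U : Finset V) (e₀ : Sym2 V) (ε : ℕ) {a b : V}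
    (ha : a ∉ U) (hb : b ∉ U) : extremalColoring U e₀ ε s(a, b) ∈ ({ε, 0} : Finset ℕ) := by
  have : s(a, b) ∈ Uᶜ.sym2 := mk_mem_sym2_iff.mpr ⟨mem_compl.mpr ha, mem_compl.mpr hb⟩
  unfold extremalColoring
  split_ifs <;> simp

theorem card_image_extremalColoring (U : Finset V) {e₀ e₁ : Sym2 V} {ε : ℕ} (hε : ε ≤ 1)
    (he₀ : e₀ ∈ Uᶜ.sym2) (he₀' : ¬e₀.IsDiag) (he₁ : e₁ ∈ Uᶜ.sym2) (he₁' : ¬e₁.IsDiag)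
    (hne : e₁ ≠ e₀) :
    #((univ.filter fun e : Sym2 V => ¬e.IsDiag).image (extremalColoring U e₀ ε)) =
      (#U).choose 2 + #U * (Fintype.card V - #U) + 1 + ε := by
  set c := extremalColoring U e₀ ε
  set D := univ.filter fun e : Sym2 V => ¬e.IsDiag
  have hmeet : #((D.filter (· ∉ Uᶜ.sym2)).image c) =
      (#U).choose 2 + #U * (Fintype.card V - #U) := by
    rw [← card_filter_not_isDiag_not_mem_sym2_compl, filter_filter]
    refine (card_image_of_injOn fun x hx y hy hxy => ?_)
    simp only [coe_filter, mem_univ, true_and, Set.mem_ofPred_eq, c, extremalColoring] at hx hy hxy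
    rw [if_neg hx.2, if_neg hy.2] at hxy
    exact (Fintype.equivFin _).injective (Fin.ext (by omega))
  have havoid : (D.filter (· ∈ Uᶜ.sym2)).image c = {ε, 0} := by
    ext x
    simp only [mem_image, mem_filter, mem_insert, mem_singleton, D, mem_univ, true_and]
    constructor
    · rintro ⟨e, ⟨-, he⟩, rfl⟩
      simp only [c, extremalColoring, if_pos he]
      split_ifs <;> simp
    · rintro (rfl | rfl)
      · exact ⟨e₀, ⟨he₀', he₀⟩, by simp [c, extremalColoring, he₀]⟩
      · exact ⟨e₁, ⟨he₁', he₁⟩, by simp [c, extremalColoring, he₁, hne]⟩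
  have hdisj :
      Disjoint ((D.filter (· ∉ Uᶜ.sym2)).image c) ((D.filter (· ∈ Uᶜ.sym2)).image c) := by
    rw [havoid, disjoint_left]
    rintro _ hx
    obtain ⟨e, he, rfl⟩ := mem_image.mp hx
    simp only [c, extremalColoring, if_neg (mem_filter.mp he).2, mem_insert, mem_singleton]
    omega
  rw [← filter_union_filter_not_eq (p := (· ∈ Uᶜ.sym2)) D, image_union,
    card_union_of_disjoint hdisj.symm, hmeet, havoid, card_pair_zero_of_le_one hε]
  ring

end Coloring

theorem stmt_7_general (k : ℕ) (hk : 2 ≤ k) (t : Fin k → ℕ) (ht : ∀ i, 2 ≤ t i)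
    (s ε : ℕ) (hs : s = ∑ i, t i / 2)
    (hε : ε = if (Finset.univ.filter fun i => Even (t i)).card = 1 then 1 else 0) :
    ∃ N : ℕ, ∀ n : ℕ, N ≤ n →
      ∃ c : Sym2 (Fin n) → ℕ,
        colorCount n c = Nat.choose (s - 2) 2 + (s - 2) * (n - s + 2) + 1 + ε ∧
        ¬ RainbowLF n c t := by
  have hε1 : ε ≤ 1 := by rw [hε]; split <;> omega
  have hs2 : 2 ≤ s :=
    calc 2 ≤ ∑ _i : Fin k, 1 := by simpa using hk
      _ ≤ s := hs ▸ sum_le_sum fun i _ => by have := ht i; omega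
  refine ⟨s + 1, fun n hn => ?_⟩
  let v (j : ℕ) (hj : j < n) : Fin n := ⟨j, hj⟩
  let U : Finset (Fin n) := Iio (v (s - 2) (by omega))
  have hU : #U = s - 2 := Fin.card_Iio _
  have hout (j : ℕ) (hj : j < n) (h : s - 2 ≤ j) : v j hj ∈ Uᶜ := by
    simpa [U, v, Fin.lt_def] using h
  refine ⟨extremalColoring U s(v (s - 2) (by omega), v (s - 1) (by omega)) ε, ?_, fun h => ?_⟩
  · rw [colorCount, card_image_extremalColoring U (e₁ := s(v (s - 2) (by omega), v s (by omega)))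
      hε1, hU, Fintype.card_fin, show n - (s - 2) = n - s + 2 by omega]
    case he₀ | he₁ => exact mk_mem_sym2_iff.mpr ⟨hout _ _ le_rfl, hout _ _ (by omega)⟩
    case he₀' | he₁' => simp only [Sym2.mk_isDiag_iff, Fin.ext_iff, v]; omega
    case hne => simp only [ne_eq, Sym2.eq_iff, Fin.ext_iff, v]; omega
  · obtain ⟨q, hq, hc⟩ := h.exists_fin_succ fun i => (ht i).trans' one_le_two
    have := two_mul_sum_half_le_of_rainbow hq hc U {ε, 0} fun a b ha hb =>
      extremalColoring_mem_of_not_mem U _ ε ha hb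
    simp only [fun i => Nat.sub_add_cancel ((ht i).trans' one_le_two), ← hs, hU,
      card_pair_zero_of_le_one hε1] at this
    split_ifs at hε <;> omega

theorem stmt_7 (k : ℕ) (hk : 2 ≤ k) (t : Fin k → ℕ) (ht : ∀ i, 2 ≤ t i)
    (heven : ∃ i, Even (t i)) (s ε : ℕ) (hs : s = ∑ i, t i / 2)
    (hε : ε = if (Finset.univ.filter fun i => Even (t i)).card = 1 then 1 else 0) :
    ∃ N : ℕ, ∀ n : ℕ, N ≤ n →
      ∃ c : Sym2 (Fin n) → ℕ,
        colorCount n c = Nat.choose (s - 2) 2 + (s - 2) * (n - s + 2) + 1 + ε ∧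
        ¬ RainbowLF n c t :=
  stmt_7_general k hk t ht s ε hs hε
end

section
/- Let s ≥ 1 and let G be an n-vertex graph with a set U of s−1 universal vertices and no edges among the remaining n−s+1 vertices, except possibly one extra edge outside U, and let F = ∪_{i=1}^k P_{t_i} be a linear forest. If G has no edge outside U, then G is F-free for every linear forest F with Σ_{i=1}^k ⌊t_i/2⌋ ≥ s. If G has exactly one edge outside U and all t_i are odd with Σ_{i=1}^k ⌊t_i/2⌋ ≥ s, then G is still F-free. -/
open Finset

/-- Key counting lemma: if for each path we can select, for every `j < t i / 2`,
an edge at positions `(2j + o i, 2j + 1 + o i)` one of whose endpoints lies in `U`,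
then `∑ t i / 2 ≤ |U| = s - 1 < s`, contradiction. -/
lemma key_lemma {n k s : ℕ} (hs : 1 ≤ s) (t : Fin k → ℕ)
    (hsum : s ≤ ∑ i, t i / 2) (U : Finset (Fin n)) (hU : U.card = s - 1)
    (p : (i : Fin k) → Fin (t i) → Fin n)
    (hinj : Function.Injective (fun q : Σ i, Fin (t i) => p q.1 q.2))
    (o : Fin k → ℕ)
    (hlt : ∀ i (j : ℕ), j < t i / 2 → 2*j+1+o i < t i)
    (hgood : ∀ i (j : ℕ) (hj : j < t i / 2) (h1 : 2*j+o i < t i) (h2 : 2*j+1+o i < t i),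
      p i ⟨2*j+o i, h1⟩ ∈ U ∨ p i ⟨2*j+1+o i, h2⟩ ∈ U) : False := by
  classical
  have h1 : ∀ i (j : ℕ), j < t i / 2 → 2*j+o i < t i := fun i j hj =>
    lt_trans (by omega) (hlt i j hj)
  have key2 : ∀ (i : Fin k) (j : Fin (t i / 2)), ∃ c : Fin (t i),
      (c.1 = 2*j.1 + o i ∨ c.1 = 2*j.1+1+o i) ∧ p i c ∈ U := by
    intro i j
    rcases hgood i j.1 j.2 (h1 i j.1 j.2) (hlt i j.1 j.2) with h | h
    · exact ⟨_, Or.inl rfl, h⟩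
    · exact ⟨_, Or.inr rfl, h⟩
  choose c hc1 hc2 using key2
  have hFinj : Function.Injective
      (fun q : Σ i, Fin (t i / 2) => (⟨p q.1 (c q.1 q.2), hc2 q.1 q.2⟩ : {x // x ∈ U})) := by
    rintro ⟨i, j⟩ ⟨i', j'⟩ hq
    simp only [Subtype.mk.injEq] at hq
    have hsig := hinj (a₁ := ⟨i, c i j⟩) (a₂ := ⟨i', c i' j'⟩) hq
    obtain ⟨hii, hcc⟩ := Sigma.mk.inj_iff.mp hsig
    subst hii
    have hcv : (c i j).1 = (c i j').1 := by rw [eq_of_heq hcc]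
    have e1 := hc1 i j
    have e2 := hc1 i j'
    have : j = j' := Fin.ext (by omega)
    rw [this]
  have hcard := Fintype.card_le_of_injective _ hFinj
  simp only [Fintype.card_sigma, Fintype.card_fin, Fintype.card_coe, hU] at hcard
  omega

/-- The graph with `s - 1` universal vertices and no (resp. exactly one) edge outside
is free of any linear forest `F` with `Σ ⌊t_i/2⌋ ≥ s` (resp. when all `t_i` are odd). -/
theorem stmt_14 (n k s : ℕ) (hs : 1 ≤ s) (t : Fin k → ℕ) (ht : ∀ i, 2 ≤ t i)
    (hsum : s ≤ ∑ i, t i / 2) (U : Finset (Fin n)) (hU : U.card = s - 1)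
    (a b : Fin n) (ha : a ∉ U) (hb : b ∉ U) (hab : a ≠ b) :
    ¬ ContainsLF (SimpleGraph.fromRel fun x _ => x ∈ U) t ∧
    ((∀ i, Odd (t i)) →
      ¬ ContainsLF (SimpleGraph.fromRel fun x y =>
          x ∈ U ∨ ((x = a ∧ y = b) ∨ (x = b ∧ y = a))) t) := by
  classical
  constructor
  · rintro ⟨p, hinj, hadj⟩
    refine key_lemma hs t hsum U hU p hinj (fun _ => 0)
      (fun i j hj => by show 2*j+1+0 < t i; omega) (fun i j hj h1 h2 => ?_)
    have hlt : 2*j + 1 < t i := by omega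
    have := (SimpleGraph.fromRel_adj _ _ _).mp (hadj i (2*j) hlt)
    exact this.2
  · rintro hodd ⟨p, hinj, hadj⟩
    have sig : ∀ {i i' : Fin k} {c : Fin (t i)} {c' : Fin (t i')},
        p i c = p i' c' → i = i' ∧ c.1 = c'.1 := by
      intro i i' c c' h
      have := hinj (a₁ := ⟨i, c⟩) (a₂ := ⟨i', c'⟩) h
      obtain ⟨h1, h2⟩ := Sigma.mk.inj_iff.mp this
      subst h1
      exact ⟨rfl, by rw [eq_of_heq h2]⟩
    -- a "bad" edge (both endpoints outside U) must be the edge {a,b}; it's unique.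
    have badUniq : ∀ (i : Fin k) (j : ℕ) (hj : j+1 < t i) (i' : Fin k) (j' : ℕ)
        (hj' : j'+1 < t i'),
        p i ⟨j, Nat.lt_of_succ_lt hj⟩ ∉ U → p i ⟨j+1, hj⟩ ∉ U →
        p i' ⟨j', Nat.lt_of_succ_lt hj'⟩ ∉ U → p i' ⟨j'+1, hj'⟩ ∉ U →
        i = i' ∧ j = j' := by
      intro i j hj i' j' hj' hb1 hb2 hb1' hb2'
      have H := (SimpleGraph.fromRel_adj _ _ _).mp (hadj i j hj)
      have H' := (SimpleGraph.fromRel_adj _ _ _).mp (hadj i' j' hj')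
      have hab1 : (p i ⟨j, Nat.lt_of_succ_lt hj⟩ = a ∧ p i ⟨j+1, hj⟩ = b) ∨
          (p i ⟨j, Nat.lt_of_succ_lt hj⟩ = b ∧ p i ⟨j+1, hj⟩ = a) := by
        rcases H.2 with (h | h | h) | (h | h | h)
        · exact absurd h hb1
        · exact Or.inl h
        · exact Or.inr h
        · exact absurd h hb2
        · exact Or.inr ⟨h.2, h.1⟩
        · exact Or.inl ⟨h.2, h.1⟩
      have hab2 : (p i' ⟨j', Nat.lt_of_succ_lt hj'⟩ = a ∧ p i' ⟨j'+1, hj'⟩ = b) ∨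
          (p i' ⟨j', Nat.lt_of_succ_lt hj'⟩ = b ∧ p i' ⟨j'+1, hj'⟩ = a) := by
        rcases H'.2 with (h | h | h) | (h | h | h)
        · exact absurd h hb1'
        · exact Or.inl h
        · exact Or.inr h
        · exact absurd h hb2'
        · exact Or.inr ⟨h.2, h.1⟩
        · exact Or.inl ⟨h.2, h.1⟩
      rcases hab1 with ⟨e1, e2⟩ | ⟨e1, e2⟩ <;> rcases hab2 with ⟨f1, f2⟩ | ⟨f1, f2⟩
      · have g1 := sig (e1.trans f1.symm)
        exact ⟨g1.1, by have := g1.2; simpa using this⟩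
      · have g1 := sig (e1.trans f2.symm)
        have g2 := sig (e2.trans f1.symm)
        simp only at g1 g2
        exact ⟨g1.1, by omega⟩
      · have g1 := sig (e1.trans f2.symm)
        have g2 := sig (e2.trans f1.symm)
        simp only at g1 g2
        exact ⟨g1.1, by omega⟩
      · have g1 := sig (e1.trans f1.symm)
        exact ⟨g1.1, by have := g1.2; simpa using this⟩
    set o : Fin k → ℕ := fun i =>
      if ∃ j : ℕ, ∃ hj : 2*j+1 < t i,
          p i ⟨2*j, Nat.lt_of_succ_lt hj⟩ ∉ U ∧ p i ⟨2*j+1, hj⟩ ∉ U then 1 else 0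
      with ho
    have hole : ∀ i, o i ≤ 1 := by
      intro i; rw [ho]; dsimp only; split <;> omega
    refine key_lemma hs t hsum U hU p hinj o (fun i j hj => ?_) (fun i j hj h1 h2 => ?_)
    · obtain ⟨m, hm⟩ := hodd i
      have := hole i
      omega
    · by_cases hc : ∃ j0 : ℕ, ∃ hj0 : 2*j0+1 < t i,
          p i ⟨2*j0, Nat.lt_of_succ_lt hj0⟩ ∉ U ∧ p i ⟨2*j0+1, hj0⟩ ∉ U
      · have hoi : o i = 1 := by rw [ho]; dsimp only; rw [if_pos hc]
        simp only [hoi] at h1 h2 ⊢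
        by_contra hcon
        push_neg at hcon
        obtain ⟨j0, hj0, hb1, hb2⟩ := hc
        have := badUniq i (2*j+1) h2 i (2*j0) hj0 hcon.1 hcon.2 hb1 hb2
        omega
      · have hoi : o i = 0 := by rw [ho]; dsimp only; rw [if_neg hc]
        simp only [hoi] at h1 h2 ⊢
        by_contra hcon
        push_neg at hcon
        exact hc ⟨j, h2, hcon.1, hcon.2⟩
end
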